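/- Let 1 ≤ d₁ ≤ d₂ ≤ … ≤ dₙ be integers with d₁ ≤ n − 1. Then there exists a tame polynomial automorphism F of ℂⁿ with mdeg F = (d₁,…,dₙ). -/
import Mathlib


open MvPolynomial

/-- A polynomial automorphism of `ℂⁿ`, viewed as a `ℂ`-algebra automorphism of
`ℂ[x₁,…,xₙ]`, is *linear* if it sends each variable to a homogeneous polynomial
of degree `1` (i.e. it is induced by an invertible linear map). -/
def IsLinearAut {n : ℕ} (F : MvPolynomial (Fin n) ℂ ≃ₐ[ℂ] MvPolynomial (Fin n) ℂ) : Prop :=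
  ∀ i : Fin n, (F (X i)).IsHomogeneous 1

/-- A polynomial automorphism of `ℂⁿ` is *triangular* if it sends `x₁ ↦ x₁` and
`xᵢ ↦ xᵢ + fᵢ(x₁,…,x_{i-1})` for `i ≥ 2`, where each `fᵢ` only involves the
preceding variables. -/
def IsTriangularAut {n : ℕ} (F : MvPolynomial (Fin n) ℂ ≃ₐ[ℂ] MvPolynomial (Fin n) ℂ) : Prop :=
  (∀ i : Fin n, (i : ℕ) = 0 → F (X i) = X i) ∧
  ∀ i : Fin n, ∃ f : MvPolynomial (Fin n) ℂ,
    (∀ j ∈ f.vars, j < i) ∧ F (X i) = X i + f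

/-- A polynomial automorphism of `ℂⁿ` is *tame* if it lies in the subgroup of all
polynomial automorphisms generated by the linear and the triangular automorphisms. -/
def IsTame {n : ℕ} (F : MvPolynomial (Fin n) ℂ ≃ₐ[ℂ] MvPolynomial (Fin n) ℂ) : Prop :=
  F ∈ Subgroup.closure {G : MvPolynomial (Fin n) ℂ ≃ₐ[ℂ] MvPolynomial (Fin n) ℂ |
    IsLinearAut G ∨ IsTriangularAut G}

/-- The multidegree of a polynomial automorphism of `ℂⁿ`: the tuple of total degrees
of the images of the variables. -/
noncomputable def mdeg {n : ℕ} (F : MvPolynomial (Fin n) ℂ ≃ₐ[ℂ] MvPolynomial (Fin n) ℂ) :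
    Fin n → ℕ :=
  fun i => (F (X i)).totalDegree

section Aux

variable {N : ℕ}

/-- Evaluating a multivariate polynomial with every variable sent to a univariate
polynomial of degree at most one does not increase the degree. -/
lemma natDegree_aeval_le (s : Fin N → Polynomial ℂ) (hs : ∀ i, (s i).natDegree ≤ 1)
    (p : MvPolynomial (Fin N) ℂ) : (aeval s p).natDegree ≤ p.totalDegree := by
  classical
  conv_lhs => rw [← support_sum_monomial_coeff p, map_sum]
  refine Polynomial.natDegree_sum_le_of_forall_le _ _ (fun u hu => ?_)
  rw [aeval_monomial]
  refine (Polynomial.natDegree_mul_le).trans ?_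
  have h1 : (algebraMap ℂ (Polynomial ℂ) (coeff u p)).natDegree = 0 :=
    Polynomial.natDegree_C _
  rw [h1, zero_add]
  refine le_trans ?_ (le_totalDegree hu)
  rw [Finsupp.prod, Finsupp.sum]
  refine (Polynomial.natDegree_prod_le _ _).trans ?_
  refine Finset.sum_le_sum fun i _ => ?_
  refine (Polynomial.natDegree_pow_le).trans ?_
  calc u i * (s i).natDegree ≤ u i * 1 := Nat.mul_le_mul_left _ (hs i)
    _ = u i := mul_one _

variable [NeZero N]

/-- The triangular automorphism `X 0 ↦ X 0`, `X i ↦ X i + X 0 ^ e i`. -/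
noncomputable def triA (e : Fin N → ℕ) :
    MvPolynomial (Fin N) ℂ ≃ₐ[ℂ] MvPolynomial (Fin N) ℂ :=
  AlgEquiv.ofAlgHom
    (aeval fun i => if i = 0 then X 0 else X i + X 0 ^ e i)
    (aeval fun i => if i = 0 then X 0 else X i - X 0 ^ e i)
    (by ext i : 1
        by_cases h : i = 0 <;> simp [h])
    (by ext i : 1
        by_cases h : i = 0 <;> simp [h])

lemma triA_X_zero (e : Fin N → ℕ) : triA e (X 0) = X 0 := by
  simp [triA]

lemma triA_X (e : Fin N → ℕ) {i : Fin N} (h : i ≠ 0) :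
    triA e (X i) = X i + X 0 ^ e i := by
  simp [triA, h]

/-- The triangular automorphism `X t ↦ X t + X j ^ a * X 0 ^ b`, other variables fixed. -/
noncomputable def triB (t j : Fin N) (a b : ℕ) (hj : j ≠ t) (ht : t ≠ 0) :
    MvPolynomial (Fin N) ℂ ≃ₐ[ℂ] MvPolynomial (Fin N) ℂ :=
  AlgEquiv.ofAlgHom
    (aeval fun i => if i = t then X t + X j ^ a * X 0 ^ b else X i)
    (aeval fun i => if i = t then X t - X j ^ a * X 0 ^ b else X i)
    (by ext i : 1
        by_cases h : i = t <;> simp [h, hj, Ne.symm ht])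
    (by ext i : 1
        by_cases h : i = t <;> simp [h, hj, Ne.symm ht])

lemma triB_X_t (t j : Fin N) (a b : ℕ) (hj : j ≠ t) (ht : t ≠ 0) :
    triB t j a b hj ht (X t) = X t + X j ^ a * X 0 ^ b := by
  simp [triB]

lemma triB_X (t j : Fin N) (a b : ℕ) (hj : j ≠ t) (ht : t ≠ 0) {i : Fin N} (h : i ≠ t) :
    triB t j a b hj ht (X i) = X i := by
  simp [triB, h]

end Aux

theorem no_name (n : ℕ) (hn : 0 < n) (d : Fin n → ℕ) (hd1 : ∀ i, 1 ≤ d i)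
    (hmono : Monotone d) (hd : d ⟨0, hn⟩ ≤ n - 1) :
    ∃ F : MvPolynomial (Fin n) ℂ ≃ₐ[ℂ] MvPolynomial (Fin n) ℂ, IsTame F ∧ mdeg F = d := by
  obtain ⟨m, rfl⟩ : ∃ m, n = m + 1 := ⟨n - 1, (Nat.succ_pred_eq_of_pos hn).symm⟩
  haveI : NeZero (m + 1) := ⟨Nat.succ_ne_zero m⟩
  set k := d 0 with hkdef
  have hk0 : d ⟨0, hn⟩ = k := by rw [hkdef]; congr 1
  have hk1 : 1 ≤ k := hd1 0
  have hkm : k ≤ m := by rw [← hk0]; simpa using hd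
  -- selection of the parameters by a pigeonhole argument
  obtain ⟨t, j, a, b, hjt, hdt⟩ :
      ∃ (t j : Fin (m + 1)) (a b : ℕ), j < t ∧ d t = a * d j + b * k := by
    by_cases hA : ∃ i : Fin (m + 1), i ≠ 0 ∧ k ∣ d i
    · obtain ⟨i, hi0, hdvd⟩ := hA
      exact ⟨i, 0, 0, d i / k, Fin.pos_of_ne_zero hi0, by
        rw [zero_mul, zero_add, Nat.div_mul_cancel hdvd]⟩
    · push_neg at hA
      have hcard : ((Finset.range k).erase 0).card <
          (Finset.univ.erase (0 : Fin (m + 1))).card := by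
        rw [Finset.card_erase_of_mem (Finset.mem_range.mpr hk1),
          Finset.card_erase_of_mem (Finset.mem_univ _), Finset.card_univ, Fintype.card_fin,
          Finset.card_range]
        omega
      obtain ⟨x, hx, y, hy, hxy, hfxy⟩ :=
        Finset.exists_ne_map_eq_of_card_lt_of_maps_to hcard
          (f := fun i => d i % k) (t := (Finset.range k).erase 0) (fun i hi => by
            have hi0 : i ≠ 0 := Finset.ne_of_mem_erase hi
            refine Finset.mem_erase.mpr ⟨?_, Finset.mem_range.mpr (Nat.mod_lt _ hk1)⟩
            exact fun h => hA i hi0 (Nat.dvd_of_mod_eq_zero h))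
      have key : ∀ x y : Fin (m + 1), x < y → d x % k = d y % k →
          ∃ (t j : Fin (m + 1)) (a b : ℕ), j < t ∧ d t = a * d j + b * k := by
        intro x y hlt hmod
        have hle : d x ≤ d y := hmono hlt.le
        have hdvd : k ∣ d y - d x := (Nat.modEq_iff_dvd' hle).mp hmod
        refine ⟨y, x, 1, (d y - d x) / k, hlt, ?_⟩
        rw [one_mul, Nat.div_mul_cancel hdvd, Nat.add_sub_cancel' hle]
      rcases lt_or_gt_of_ne hxy with h | h
      · exact key x y h hfxy
      · exact key y x h hfxy.symm
  have ht0 : t ≠ 0 := by rintro rfl; exact absurd hjt (by simp)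
  have hjt' : j ≠ t := ne_of_lt hjt
  -- the automorphisms
  set τ : Equiv.Perm (Fin (m + 1)) := Equiv.swap 0 t with hτ
  have hττ : ∀ i, τ (τ i) = i := fun i => Equiv.swap_apply_self _ _ _
  have hτ0 : τ 0 = t := Equiv.swap_apply_left _ _
  have hτt : τ t = 0 := Equiv.swap_apply_right _ _
  set P : MvPolynomial (Fin (m + 1)) ℂ ≃ₐ[ℂ] MvPolynomial (Fin (m + 1)) ℂ :=
    renameEquiv ℂ τ with hPdef
  have hPX : ∀ i, P (X i) = X (τ i) := fun i => by
    rw [hPdef, renameEquiv_apply, rename_X]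
  set e : Fin (m + 1) → ℕ := fun i => d (τ i) with he
  set Cm : MvPolynomial (Fin (m + 1)) ℂ ≃ₐ[ℂ] MvPolynomial (Fin (m + 1)) ℂ :=
    P.trans ((triA e).trans P) with hCm
  set Bm := triB t j a b hjt' ht0 with hBm
  set F := Bm.trans Cm with hF
  -- images of `Cm`
  have hCt : Cm (X t) = X t := by
    rw [hCm, AlgEquiv.trans_apply, AlgEquiv.trans_apply, hPX, hτt, triA_X_zero, hPX, hτ0]
  have hCi : ∀ i, i ≠ t → Cm (X i) = X i + X t ^ d i := by
    intro i hi
    have h1 : τ i ≠ 0 := by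
      intro h
      exact hi (by rw [← hττ i, h, hτ0])
    rw [hCm, AlgEquiv.trans_apply, AlgEquiv.trans_apply, hPX, triA_X e h1, map_add, map_pow,
      hPX, hPX, hττ, hτ0]
    have : e (τ i) = d i := by rw [he]; simp only; rw [hττ]
    rw [this]
  -- images of `F`
  have hFt : F (X t) = X t + (X j + X t ^ d j) ^ a * (X 0 + X t ^ k) ^ b := by
    rw [hF, AlgEquiv.trans_apply, hBm, triB_X_t, map_add, map_mul, map_pow, map_pow, hCt,
      hCi j hjt', hCi 0 (Ne.symm ht0), ← hkdef]
  have hFi : ∀ i, i ≠ t → F (X i) = X i + X t ^ d i := by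
    intro i hi
    rw [hF, AlgEquiv.trans_apply, hBm, triB_X t j a b hjt' ht0 hi, hCi i hi]
  -- tameness
  have hLin : IsLinearAut P := by
    intro i
    rw [hPX]
    exact isHomogeneous_X ℂ _
  have hTriA : IsTriangularAut (triA e) := by
    constructor
    · intro i hi
      have : i = 0 := Fin.ext (by simpa using hi)
      rw [this, triA_X_zero]
    · intro i
      by_cases h : i = 0
      · exact ⟨0, by simp, by rw [h, triA_X_zero, add_zero]⟩
      · refine ⟨X 0 ^ e i, fun v hv => ?_, triA_X e h⟩
        have hv' : v ∈ (X (0 : Fin (m + 1)) : MvPolynomial (Fin (m + 1)) ℂ).vars :=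
          vars_pow _ _ hv
        rw [vars_X, Finset.mem_singleton] at hv'
        rw [hv']
        exact Fin.pos_of_ne_zero h
  have hTriB : IsTriangularAut Bm := by
    constructor
    · intro i hi
      have hi' : i ≠ t := by
        rintro rfl
        exact ht0 (Fin.ext (by simpa using hi))
      rw [hBm]
      exact triB_X t j a b hjt' ht0 hi'
    · intro i
      by_cases h : i = t
      · refine ⟨X j ^ a * X 0 ^ b, fun v hv => ?_, by rw [h, hBm]; exact triB_X_t t j a b hjt' ht0⟩
        classical
        have hv' := vars_mul _ _ hv
        rw [Finset.mem_union] at hv'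
        rcases hv' with hv' | hv'
        · have hvj := vars_pow _ _ hv'
          rw [vars_X, Finset.mem_singleton] at hvj
          rw [hvj, h]
          exact hjt
        · have hv0 := vars_pow _ _ hv'
          rw [vars_X, Finset.mem_singleton] at hv0
          rw [hv0, h]
          exact lt_of_le_of_lt (Fin.zero_le j) hjt
      · exact ⟨0, by simp, by rw [hBm, triB_X t j a b hjt' ht0 h, add_zero]⟩
  refine ⟨F, ?_, ?_⟩
  · show F ∈ Subgroup.closure _
    have hgen : ∀ G : MvPolynomial (Fin (m + 1)) ℂ ≃ₐ[ℂ] MvPolynomial (Fin (m + 1)) ℂ,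
        (IsLinearAut G ∨ IsTriangularAut G) → G ∈ Subgroup.closure
          {G : MvPolynomial (Fin (m + 1)) ℂ ≃ₐ[ℂ] MvPolynomial (Fin (m + 1)) ℂ |
            IsLinearAut G ∨ IsTriangularAut G} := fun G hG => Subgroup.subset_closure hG
    have hPmem := hgen P (Or.inl hLin)
    have hAmem := hgen (triA e) (Or.inr hTriA)
    have hBmem := hgen Bm (Or.inr hTriB)
    have hFeq : F = (P * triA e * P) * Bm := rfl
    rw [hFeq]
    exact mul_mem (mul_mem (mul_mem hPmem hAmem) hPmem) hBmem
  · -- multidegree computation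
    classical
    set s : Fin (m + 1) → Polynomial ℂ := fun i => if i = t then Polynomial.X else 0 with hs
    have hs1 : ∀ i, (s i).natDegree ≤ 1 := by
      intro i
      rw [hs]
      by_cases h : i = t <;> simp [h]
    funext i
    show (F (X i)).totalDegree = d i
    by_cases hi : i = t
    · subst hi
      rw [hFt]
      have hD1 : 1 ≤ a * d j + b * k := hdt ▸ hd1 i
      have h1 : (X j + X i ^ d j : MvPolynomial (Fin (m + 1)) ℂ).totalDegree ≤ d j := by
        refine (totalDegree_add _ _).trans (max_le ?_ ?_)
        · rw [totalDegree_X]; exact hd1 j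
        · rw [totalDegree_X_pow]
      have h2 : (X 0 + X i ^ k : MvPolynomial (Fin (m + 1)) ℂ).totalDegree ≤ k := by
        refine (totalDegree_add _ _).trans (max_le ?_ ?_)
        · rw [totalDegree_X]; exact hk1
        · rw [totalDegree_X_pow]
      have hub : (X i + (X j + X i ^ d j) ^ a * (X 0 + X i ^ k) ^ b :
          MvPolynomial (Fin (m + 1)) ℂ).totalDegree ≤ a * d j + b * k := by
        refine (totalDegree_add _ _).trans (max_le ?_ ?_)
        · rw [totalDegree_X]; exact hD1
        · refine (totalDegree_mul _ _).trans ?_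
          exact add_le_add ((totalDegree_pow _ _).trans (Nat.mul_le_mul_left a h1))
            ((totalDegree_pow _ _).trans (Nat.mul_le_mul_left b h2))
      have him : aeval s ((X i + (X j + X i ^ d j) ^ a * (X 0 + X i ^ k) ^ b :
          MvPolynomial (Fin (m + 1)) ℂ)) =
          Polynomial.X + Polynomial.X ^ (a * d j + b * k) := by
        simp only [map_add, map_mul, map_pow, aeval_X, hs, if_pos rfl, if_neg hjt',
          if_neg (Ne.symm ht0), eq_self_iff_true, if_true]
        rw [zero_add, zero_add, ← pow_mul, ← pow_mul, ← pow_add]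
        have harith : d j * a + k * b = a * d j + b * k := by ring
        rw [harith]
      have hcoeff : (Polynomial.X + Polynomial.X ^ (a * d j + b * k) :
          Polynomial ℂ).coeff (a * d j + b * k) ≠ 0 := by
        rw [Polynomial.coeff_add, Polynomial.coeff_X, Polynomial.coeff_X_pow, if_pos rfl]
        split_ifs with h <;> norm_num
      have hlb : a * d j + b * k ≤ (X i + (X j + X i ^ d j) ^ a * (X 0 + X i ^ k) ^ b :
          MvPolynomial (Fin (m + 1)) ℂ).totalDegree := by
        refine le_trans ?_ (natDegree_aeval_le s hs1 _)
        rw [him]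
        exact Polynomial.le_natDegree_of_ne_zero hcoeff
      rw [hdt]
      exact le_antisymm hub hlb
    · rw [hFi i hi]
      have hub : (X i + X t ^ d i : MvPolynomial (Fin (m + 1)) ℂ).totalDegree ≤ d i := by
        refine (totalDegree_add _ _).trans (max_le ?_ ?_)
        · rw [totalDegree_X]; exact hd1 i
        · rw [totalDegree_X_pow]
      have him : aeval s ((X i + X t ^ d i : MvPolynomial (Fin (m + 1)) ℂ)) =
          Polynomial.X ^ d i := by
        simp only [map_add, map_pow, aeval_X, hs, if_pos rfl, if_neg hi, eq_self_iff_true, if_true]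
        rw [zero_add]
      have hlb : d i ≤ (X i + X t ^ d i : MvPolynomial (Fin (m + 1)) ℂ).totalDegree := by
        refine le_trans ?_ (natDegree_aeval_le s hs1 _)
        rw [him, Polynomial.natDegree_X_pow]
      exact le_antisymm hub hlb
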